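/- arXiv:1406.0217 — 3 statements merged into one kernel-verified Lean document; each statement's English description precedes it below -/
import Mathlib

section
/- Let T and T' be binary phylogenetic trees on leaf set {1,…,n} that induce different sets of splits. Then there exists a character f : {1,…,n} → {0,1} such that either ps(f,T) = 1 and ps(f,T') > 1, or ps(f,T') = 1 and ps(f,T) > 1. (Every binary phylogenetic tree is uniquely determined by its set of characters of parsimony score 1.) -/
open Classical

/-- A binary phylogenetic tree on leaf set `{1, …, n}` (represented by `Fin n`),
with vertex set `Fin (2 * n - 2)`: a connected acyclic simple graph in which every
vertex has degree 1 or 3, together with a bijective labeling of the degree-1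
vertices (the leaves) by `Fin n`.  The collection of such trees is `UB(n)`. -/
structure PhyloTree (n : ℕ) where
  adj : SimpleGraph (Fin (2 * n - 2))
  connected : adj.Connected
  acyclic : adj.IsAcyclic
  degOneOrThree : ∀ v, (adj.neighborSet v).ncard = 1 ∨ (adj.neighborSet v).ncard = 3
  leaf : Fin n → Fin (2 * n - 2)
  leaf_inj : Function.Injective leaf
  leaf_range : ∀ v, (adj.neighborSet v).ncard = 1 ↔ ∃ i, leaf i = v

/-- The changing number of an assignment `g` of states to the vertices of `T`:
the number of edges of `T` whose two endpoints receive different states. -/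
noncomputable def changingNumber {n : ℕ} (T : PhyloTree n)
    (g : Fin (2 * n - 2) → Bool) : ℕ :=
  Set.ncard {e : Sym2 (Fin (2 * n - 2)) |
    e ∈ T.adj.edgeSet ∧ ∃ u v, e = s(u, v) ∧ g u ≠ g v}

/-- The parsimony score of a character `f` on a tree `T`: the minimum changing
number over all extensions of `f` to the vertices of `T`. -/
noncomputable def ps {n : ℕ} (f : Fin n → Bool) (T : PhyloTree n) : ℕ :=
  sInf {m | ∃ g : Fin (2 * n - 2) → Bool,
    (∀ i, g (T.leaf i) = f i) ∧ changingNumber T g = m}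

/-- The set of splits of `T`: for each edge `s(u, v)` of `T`, the bipartition of the
leaf labels into those whose leaf lies in the component of `u` and those whose leaf
lies in the component of `v`, after deleting the edge. -/
def splits {n : ℕ} (T : PhyloTree n) : Set (Set (Set (Fin n))) :=
  {σ | ∃ u v, s(u, v) ∈ T.adj.edgeSet ∧
    σ = { {i | (T.adj.deleteEdges {s(u, v)}).Reachable (T.leaf i) u},
          {i | (T.adj.deleteEdges {s(u, v)}).Reachable (T.leaf i) v} } }

/-- A character `f` is compatible with a tree `T` if it is non-constant and the
partition `{f⁻¹(0), f⁻¹(1)}` equals the split of `T` at some edge. -/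
def CompatibleWithTree {n : ℕ} (f : Fin n → Bool) (T : PhyloTree n) : Prop :=
  (∃ i j, f i ≠ f j) ∧
    ({ {i | f i = false}, {i | f i = true} } : Set (Set (Fin n))) ∈ splits T

/-- Two characters are compatible with each other if at least one of the four
intersections of their preimage sets is empty. -/
def CharCompatible {n : ℕ} (f₁ f₂ : Fin n → Bool) : Prop :=
  {i | f₁ i = false} ∩ {i | f₂ i = false} = ∅ ∨
  {i | f₁ i = false} ∩ {i | f₂ i = true} = ∅ ∨
  {i | f₁ i = true} ∩ {i | f₂ i = false} = ∅ ∨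
  {i | f₁ i = true} ∩ {i | f₂ i = true} = ∅

/-- A tree on six leaves has the symmetric shape if some vertex has all three of
its neighbors of degree 3. -/
def IsSymmetricShape (T : PhyloTree 6) : Prop :=
  ∃ v, (T.adj.neighborSet v).ncard = 3 ∧
    ∀ u ∈ T.adj.neighborSet v, (T.adj.neighborSet u).ncard = 3

/-- A tree on six leaves has the caterpillar shape if no vertex has all three of
its neighbors of degree 3. -/
def IsCaterpillarShape (T : PhyloTree 6) : Prop :=
  ¬ ∃ v, (T.adj.neighborSet v).ncard = 3 ∧
    ∀ u ∈ T.adj.neighborSet v, (T.adj.neighborSet u).ncard = 3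

/-- `T` is a maximum parsimony tree for the sequence of characters `F`. -/
def IsMPTree {n k : ℕ} (F : Fin k → Fin n → Bool) (T : PhyloTree n) : Prop :=
  ∀ T' : PhyloTree n, (∑ i, ps (F i) T) ≤ ∑ i, ps (F i) T'

/-! A character has parsimony score 1 on a tree exactly when it is non-constant and its
bipartition is a split of the tree: an extension with a single changing edge is constant on
both sides of that edge, and conversely the indicator of one side of an edge changes only
across that edge. So a split of `T` that is not a split of `T'` gives a character of score 1
on `T` whose score on `T'` is neither 0 (the character is non-constant) nor 1. -/

namespace SimpleGraph

variable {V β : Type*} {G : SimpleGraph V} {u v x y : V}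

def changingEdges (G : SimpleGraph V) (g : V → β) : Set (Sym2 V) :=
  {e | e ∈ G.edgeSet ∧ ∃ a b, e = s(a, b) ∧ g a ≠ g b}

lemma mk_mem_changingEdges {g : V → β} {a b : V} :
    s(a, b) ∈ G.changingEdges g ↔ G.Adj a b ∧ g a ≠ g b := by
  refine ⟨fun ⟨hab, a', b', he, hne⟩ => ⟨hab, ?_⟩, fun ⟨hab, hne⟩ => ⟨hab, a, b, rfl, hne⟩⟩
  rcases Sym2.eq_iff.mp he with ⟨rfl, rfl⟩ | ⟨rfl, rfl⟩
  exacts [hne, hne.symm]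

lemma Reachable.eq_of_changingEdges_subset {g : V → β} {s : Set (Sym2 V)}
    (hs : G.changingEdges g ⊆ s) (h : (G.deleteEdges s).Reachable x y) : g x = g y := by
  obtain ⟨p⟩ := h
  induction p with
  | nil => rfl
  | cons hab _ ih =>
    rw [deleteEdges_adj] at hab
    exact (not_not.mp fun hne => hab.2 (hs (mk_mem_changingEdges.mpr ⟨hab.1, hne⟩))).trans ih

lemma IsAcyclic.not_reachable_deleteEdges (h : G.IsAcyclic) (huv : G.Adj u v) :
    ¬ (G.deleteEdges {s(u, v)}).Reachable u v :=
  isBridge_iff.mp (isAcyclic_iff_forall_adj_isBridge.mp h huv)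

lemma Reachable.deleteEdges_reachable_or (h : G.Reachable x u) :
    (G.deleteEdges {s(u, v)}).Reachable x u ∨ (G.deleteEdges {s(u, v)}).Reachable x v := by
  obtain ⟨p⟩ := h
  induction p with
  | nil => exact .inl .rfl
  | @cons a b u hab _ ih =>
    by_cases he : s(a, b) = s(u, v)
    · rcases Sym2.eq_iff.mp he with ⟨rfl, -⟩ | ⟨rfl, -⟩
      exacts [.inl .rfl, .inr .rfl]
    · have hab' : (G.deleteEdges {s(u, v)}).Adj a b := deleteEdges_adj.mpr ⟨hab, he⟩
      exact ih.imp hab'.reachable.trans hab'.reachable.trans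

lemma IsAcyclic.changingEdges_eq_singleton (h : G.IsAcyclic) (huv : G.Adj u v) {g : V → Bool}
    (hg : ∀ x, g x = true ↔ (G.deleteEdges {s(u, v)}).Reachable x v) :
    G.changingEdges g = {s(u, v)} := by
  refine Set.Subset.antisymm ?_ fun e he => ?_
  · rintro _ ⟨hab, a, b, rfl, hne⟩
    by_contra he
    have hab' : (G.deleteEdges {s(u, v)}).Adj a b := deleteEdges_adj.mpr ⟨hab, he⟩
    exact hne <| Bool.eq_iff_iff.mpr <| (hg a).trans <|
      Iff.trans ⟨hab'.symm.reachable.trans, hab'.reachable.trans⟩ (hg b).symm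
  · rw [Set.mem_singleton_iff.mp he, mk_mem_changingEdges]
    exact ⟨huv, fun huv' => h.not_reachable_deleteEdges huv <|
      (hg u).mp (huv'.trans ((hg v).mpr .rfl))⟩

lemma Preconnected.eq_iff_reachable_of_changingEdges_eq {g : V → β} (hG : G.Preconnected)
    (hg : G.changingEdges g = {s(u, v)}) (x : V) :
    g x = g v ↔ (G.deleteEdges {s(u, v)}).Reachable x v := by
  have hsub : G.changingEdges g ⊆ {s(u, v)} := hg.le
  have hguv : g u ≠ g v := (mk_mem_changingEdges.mp (hg ▸ rfl : s(u, v) ∈ G.changingEdges g)).2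
  refine ⟨fun hx => ?_, fun hx => hx.eq_of_changingEdges_subset hsub⟩
  refine (hG x u).deleteEdges_reachable_or.resolve_left fun hxu => hguv ?_
  rw [← hxu.eq_of_changingEdges_subset hsub, hx]

lemma IsAcyclic.reachable_deleteEdges_iff_not_reachable (h : G.IsAcyclic) (hG : G.Preconnected)
    (huv : G.Adj u v) (x : V) :
    (G.deleteEdges {s(u, v)}).Reachable x u ↔ ¬ (G.deleteEdges {s(u, v)}).Reachable x v :=
  ⟨fun hxu hxv => h.not_reachable_deleteEdges huv (hxu.symm.trans hxv),
    (hG x u).deleteEdges_reachable_or.resolve_right⟩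

lemma IsAcyclic.exists_isPath_forall_adj_eq_penultimate [Finite V] (h : G.IsAcyclic) (v : V) :
    ∃ (w : V) (p : G.Walk v w), p.IsPath ∧ ∀ x, G.Adj w x → x = p.penultimate := by
  have := Fintype.ofFinite V
  have hfin : {k | ∃ (w : V) (p : G.Walk v w), p.IsPath ∧ p.length = k}.Finite :=
    (Set.finite_lt_nat (Fintype.card V)).subset fun k ⟨_, _, hp, hk⟩ => hk ▸ hp.length_lt
  obtain ⟨_, ⟨w, p, hp, rfl⟩, hmax⟩ := hfin.exists_maximal ⟨0, v, .nil, .nil, rfl⟩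
  refine ⟨w, p, hp, fun x hwx => h.eq_penultimate_of_adj_end hp hwx ?_⟩
  by_contra hx
  have := hmax ⟨x, _, hp.concat hx hwx, rfl⟩
  simp [Walk.length_concat] at this

end SimpleGraph

open SimpleGraph

namespace PhyloTree

variable {n : ℕ} (T : PhyloTree n)

lemma exists_leaf_reachable_deleteEdges {u v : Fin (2 * n - 2)} (huv : T.adj.Adj u v) :
    ∃ i, (T.adj.deleteEdges {s(u, v)}).Reachable (T.leaf i) v := by
  obtain ⟨w, p, -, hpen⟩ :=
    (T.acyclic.anti (deleteEdges_le _)).exists_isPath_forall_adj_eq_penultimate v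
  have hwu : w ≠ u := by
    rintro rfl
    exact T.acyclic.not_reachable_deleteEdges huv p.reachable.symm
  have hnbr : T.adj.neighborSet w ⊆ {p.penultimate, u} := fun x hwx => by
    by_cases he : s(w, x) = s(u, v)
    · rcases Sym2.eq_iff.mp he with ⟨h, -⟩ | ⟨-, rfl⟩
      exacts [absurd h hwu, .inr rfl]
    · exact .inl (hpen x (deleteEdges_adj.mpr ⟨hwx, he⟩))
  have hdeg : (T.adj.neighborSet w).ncard = 1 := by
    have := (Set.ncard_le_ncard hnbr).trans (Set.ncard_insert_le _ _)
    rw [Set.ncard_singleton] at this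
    rcases T.degOneOrThree w with h | h <;> omega
  obtain ⟨i, rfl⟩ := (T.leaf_range w).mp hdeg
  exact ⟨i, p.reachable.symm⟩

lemma split_eq_of_forall_eq_true_iff {f : Fin n → Bool} {u v : Fin (2 * n - 2)}
    (huv : T.adj.Adj u v)
    (hf : ∀ i, f i = true ↔ (T.adj.deleteEdges {s(u, v)}).Reachable (T.leaf i) v) :
    ({ {i | f i = false}, {i | f i = true} } : Set (Set (Fin n))) =
      { {i | (T.adj.deleteEdges {s(u, v)}).Reachable (T.leaf i) u},
        {i | (T.adj.deleteEdges {s(u, v)}).Reachable (T.leaf i) v} } := by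
  simp only [T.acyclic.reachable_deleteEdges_iff_not_reachable T.connected.preconnected huv,
    ← hf, Bool.not_eq_true]

lemma compatibleWithTree_iff {f : Fin n → Bool} :
    CompatibleWithTree f T ↔ ∃ u v, T.adj.Adj u v ∧
      ∀ i, f i = true ↔ (T.adj.deleteEdges {s(u, v)}).Reachable (T.leaf i) v := by
  constructor
  · rintro ⟨-, u, v, huv, hsplit⟩
    rcases Set.pair_eq_pair_iff.mp hsplit with ⟨-, htrue⟩ | ⟨-, htrue⟩
    · exact ⟨u, v, huv, fun i => Set.ext_iff.mp htrue i⟩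
    · refine ⟨v, u, huv.symm, fun i => ?_⟩
      rw [Sym2.eq_swap]
      exact Set.ext_iff.mp htrue i
  · rintro ⟨u, v, huv, hf⟩
    obtain ⟨i, hi⟩ := T.exists_leaf_reachable_deleteEdges huv
    obtain ⟨j, hj⟩ := T.exists_leaf_reachable_deleteEdges huv.symm
    rw [Sym2.eq_swap] at hj
    refine ⟨⟨i, j, ?_⟩, u, v, huv, T.split_eq_of_forall_eq_true_iff huv hf⟩
    rw [(hf i).mpr hi, ne_comm, Ne, hf]
    exact (T.acyclic.reachable_deleteEdges_iff_not_reachable T.connected.preconnected huv _).mp hj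

lemma changingNumber_eq_ncard (g : Fin (2 * n - 2) → Bool) :
    changingNumber T g = (T.adj.changingEdges g).ncard :=
  rfl

lemma exists_changingNumber_eq_ps (f : Fin n → Bool) :
    ∃ g, (∀ i, g (T.leaf i) = f i) ∧ changingNumber T g = ps f T := by
  obtain ⟨g, hg⟩ : ∃ g : Fin (2 * n - 2) → Bool, ∀ i, g (T.leaf i) = f i :=
    ⟨_, T.leaf_inj.extend_apply f fun _ => false⟩
  show sInf _ ∈ {m | ∃ g, (∀ i, g (T.leaf i) = f i) ∧ changingNumber T g = m}
  exact Nat.sInf_mem ⟨_, g, hg, rfl⟩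

lemma ps_le_changingNumber {f : Fin n → Bool} {g : Fin (2 * n - 2) → Bool}
    (hg : ∀ i, g (T.leaf i) = f i) : ps f T ≤ changingNumber T g :=
  Nat.sInf_le ⟨g, hg, rfl⟩

lemma ps_pos {f : Fin n → Bool} (hf : ∃ i j, f i ≠ f j) : 0 < ps f T := by
  obtain ⟨g, hg, hps⟩ := T.exists_changingNumber_eq_ps f
  obtain ⟨i, j, hij⟩ := hf
  refine Nat.pos_of_ne_zero fun h0 => hij ?_
  rw [changingNumber_eq_ncard, h0, Set.ncard_eq_zero] at hps
  rw [← hg i, ← hg j]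
  refine Reachable.eq_of_changingEdges_subset hps.le ?_
  rw [deleteEdges_empty]
  exact T.connected.preconnected _ _

lemma ps_eq_one_iff {f : Fin n → Bool} : ps f T = 1 ↔ CompatibleWithTree f T := by
  constructor
  · intro h1
    obtain ⟨g, hg, hps⟩ := T.exists_changingNumber_eq_ps f
    rw [changingNumber_eq_ncard, h1, Set.ncard_eq_one] at hps
    obtain ⟨e, he⟩ := hps
    obtain ⟨hab, a, b, rfl, hne⟩ : e ∈ T.adj.changingEdges g := by rw [he]; rfl
    obtain ⟨u, v, huv, hce, hv⟩ : ∃ u v, T.adj.Adj u v ∧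
        T.adj.changingEdges g = {s(u, v)} ∧ g v = true := by
      cases hb : g b
      · exact ⟨b, a, hab.symm, by rw [he, Sym2.eq_swap], by simpa [hb] using hne⟩
      · exact ⟨a, b, hab, he, hb⟩
    refine T.compatibleWithTree_iff.mpr ⟨u, v, huv, fun i => ?_⟩
    rw [← hg i, ← hv]
    exact T.connected.preconnected.eq_iff_reachable_of_changingEdges_eq hce _
  · intro h
    obtain ⟨u, v, huv, hf⟩ := T.compatibleWithTree_iff.mp h
    refine le_antisymm ?_ (T.ps_pos h.1)
    calc ps f T ≤ changingNumber T fun x => decide ((T.adj.deleteEdges {s(u, v)}).Reachable x v) :=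
          T.ps_le_changingNumber fun i => by rw [Bool.eq_iff_iff, decide_eq_true_iff, hf]
      _ = 1 := by
          rw [changingNumber_eq_ncard,
            T.acyclic.changingEdges_eq_singleton huv fun _ => decide_eq_true_iff,
            Set.ncard_singleton]

end PhyloTree

lemma exists_ps_eq_one_and_one_lt_ps {n : ℕ} {T T' : PhyloTree n} {σ : Set (Set (Fin n))}
    (hσ : σ ∈ splits T) (hσ' : σ ∉ splits T') :
    ∃ f : Fin n → Bool, ps f T = 1 ∧ 1 < ps f T' := by
  obtain ⟨u, v, huv, rfl⟩ := hσ
  set f : Fin n → Bool := fun i => decide ((T.adj.deleteEdges {s(u, v)}).Reachable (T.leaf i) v)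
  have hf : ∀ i, f i = true ↔ (T.adj.deleteEdges {s(u, v)}).Reachable (T.leaf i) v :=
    fun _ => decide_eq_true_iff
  have hT : CompatibleWithTree f T := T.compatibleWithTree_iff.mpr ⟨u, v, huv, hf⟩
  have hps' : ps f T' ≠ 1 := fun h =>
    hσ' (T.split_eq_of_forall_eq_true_iff huv hf ▸ (T'.ps_eq_one_iff.mp h).2)
  have := T'.ps_pos hT.1
  exact ⟨f, T.ps_eq_one_iff.mpr hT, by omega⟩

theorem stmt9_general (n : ℕ) (T T' : PhyloTree n)
    (hdiff : splits T ≠ splits T') :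
    ∃ f : Fin n → Bool,
      (ps f T = 1 ∧ 1 < ps f T') ∨ (ps f T' = 1 ∧ 1 < ps f T) := by
  obtain ⟨σ, hσ⟩ := not_forall.mp (mt Set.ext hdiff)
  by_cases hσT : σ ∈ splits T
  · obtain ⟨f, hf⟩ := exists_ps_eq_one_and_one_lt_ps hσT fun h => hσ (iff_of_true hσT h)
    exact ⟨f, .inl hf⟩
  · obtain ⟨f, hf⟩ :=
      exists_ps_eq_one_and_one_lt_ps (not_not.mp fun h => hσ (iff_of_false hσT h)) hσT
    exact ⟨f, .inr hf⟩

/-- If two binary phylogenetic trees on {1,…,n} induce different sets of splits,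
then some character has parsimony score 1 on one of them and score greater than 1
on the other. -/
theorem stmt9 (n : ℕ) (hn : 2 ≤ n) (T T' : PhyloTree n)
    (hdiff : splits T ≠ splits T') :
    ∃ f : Fin n → Bool,
      (ps f T = 1 ∧ 1 < ps f T') ∨ (ps f T' = 1 ∧ 1 < ps f T) :=
  stmt9_general n T T' hdiff
end

section
/- Let (f_1, f_2) be a pair of characters on {1,…,n} and consider the minimum M of ps(f_1,T) + ps(f_2,T) over all binary phylogenetic trees T on leaf set {1,…,n}. Then: (i) M = 0 if f_1 and f_2 are both constant; (ii) M = 1 if exactly one of f_1, f_2 is constant; (iii) M = 2 if neither f_1 nor f_2 is constant and f_1, f_2 are compatible with each other; (iv) M = 3 if neither f_1 nor f_2 is constant and f_1, f_2 are not compatible with each other. -/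
open Classical

/-!
A non-constant character changes at least once on every tree, since trees are connected. If two
characters both have score one on the same tree, each changes along a single edge; the edge of
`f₂` lies on one side of the edge of `f₁`, so `f₂` is constant on the other side, which contains a
whole state class of `f₁`: the characters are compatible.

Conversely, on a caterpillar whose leaves are sorted by a key through which `f` factors as
`P ∘ key`, colouring every spine vertex like a leaf hanging from it gives an extension of `f`
that changes at most as often as `P` does. Sorting the leaves by the pair of states in the order
`00, 01, 11, 10` gives scores `1` and `2`, and when one pair class is empty it can be put last,
giving `1` and `1`.
-/

namespace SimpleGraph

variable {V : Type*} {G : SimpleGraph V}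

theorem Reachable.mem_of_adj_closed {S : Set V} (hS : ∀ a b, G.Adj a b → a ∈ S → b ∈ S)
    {x y : V} (h : G.Reachable x y) (hx : x ∈ S) : y ∈ S := by
  obtain ⟨p⟩ := h
  induction p with
  | nil => exact hx
  | cons hab _ ih => exact ih (hS _ _ hab hx)

theorem Reachable.eq_of_forall_adj {β : Type*} {g : V → β} {x y : V}
    (hg : ∀ a b, G.Adj a b → G.Reachable x a → g a = g b) (h : G.Reachable x y) : g x = g y :=
  (h.mem_of_adj_closed (S := {w | G.Reachable x w ∧ g x = g w})
    (fun a b hab ⟨hxa, ha⟩ => ⟨hxa.trans hab.reachable, ha.trans (hg a b hab hxa)⟩)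
    ⟨Reachable.rfl, rfl⟩).2

theorem Connected.reachable_deleteEdges_or (hG : G.Connected) (u v w : V) :
    (G.deleteEdges {s(u, v)}).Reachable u w ∨ (G.deleteEdges {s(u, v)}).Reachable v w := by
  refine (hG u w).mem_of_adj_closed (S := {w | (G.deleteEdges {s(u, v)}).Reachable u w ∨
    (G.deleteEdges {s(u, v)}).Reachable v w}) (fun a b hab ha => ?_) (Or.inl Reachable.rfl)
  by_cases he : s(a, b) = s(u, v)
  · rcases Sym2.eq_iff.1 he with ⟨-, rfl⟩ | ⟨-, rfl⟩
    exacts [Or.inr Reachable.rfl, Or.inl Reachable.rfl]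
  · have hab' : (G.deleteEdges {s(u, v)}).Adj a b := deleteEdges_adj.2 ⟨hab, he⟩
    exact ha.imp (·.trans hab'.reachable) (·.trans hab'.reachable)

theorem Reachable.eq_of_deleteEdges {β : Type*} {g : V → β} {e : Sym2 V}
    (hg : ∀ a b, G.Adj a b → g a ≠ g b → s(a, b) = e) {x y : V}
    (h : (G.deleteEdges {e}).Reachable x y) : g x = g y :=
  h.eq_of_forall_adj fun a b hab _ => by
    by_contra hne
    exact (deleteEdges_adj.1 hab).2 (hg a b (deleteEdges_adj.1 hab).1 hne)

theorem Connected.reachable_deleteEdges_of_eq {β : Type*} (hG : G.Connected) {g : V → β}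
    {u v : V} (hne : g u ≠ g v) (hg : ∀ a b, G.Adj a b → g a ≠ g b → s(a, b) = s(u, v))
    {w : V} (hw : g w = g v) : (G.deleteEdges {s(u, v)}).Reachable v w :=
  (hG.reachable_deleteEdges_or u v w).resolve_left fun h => hne ((h.eq_of_deleteEdges hg).trans hw)

def parentGraph (p : V → V) : SimpleGraph V := fromRel fun u v => p u = v

variable {p : V → V} {r : V → ℕ}

theorem exists_reachable_fixedPoint (hr : ∀ v, p v ≠ v → r (p v) < r v) (v : V) :
    ∃ w, p w = w ∧ (parentGraph p).Reachable v w := by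
  induction hv : r v using Nat.strong_induction_on generalizing v with
  | _ k ih =>
    by_cases hpv : p v = v
    · exact ⟨v, hpv, .rfl⟩
    · obtain ⟨w, hw, hreach⟩ := ih _ (hv ▸ hr v hpv) (p v) rfl
      exact ⟨w, hw, (fromRel_adj _ _ _ |>.2 ⟨Ne.symm hpv, Or.inl rfl⟩).reachable.trans hreach⟩

theorem parentGraph_connected [Nonempty V] (hr : ∀ v, p v ≠ v → r (p v) < r v)
    (hroot : ∀ u v, p u = u → p v = v → u = v) : (parentGraph p).Connected := by
  refine (connected_iff _).2 ⟨fun u v => ?_, ‹_›⟩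
  obtain ⟨u', hu', hu⟩ := exists_reachable_fixedPoint hr u
  obtain ⟨v', hv', hv⟩ := exists_reachable_fixedPoint hr v
  exact hu.trans (hroot u' v' hu' hv' ▸ hv.symm)

theorem parentGraph_isAcyclic (hr : ∀ v, p v ≠ v → r (p v) < r v) :
    (parentGraph p).IsAcyclic := by
  have hmono : ∀ k w, r (p^[k] w) ≤ r w := by
    intro k
    induction k with
    | zero => simp
    | succ k ih =>
      intro w
      rw [Function.iterate_succ_apply]
      refine (ih (p w)).trans ?_
      by_cases hw : p w = w
      · rw [hw]
      · exact (hr w hw).le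
  -- deleting the edge `v — p v` separates `p v` from the descendants of `v`
  have key : ∀ v, p v ≠ v → ¬((parentGraph p).deleteEdges {s(p v, v)}).Reachable v (p v) := by
    intro v hv hreach
    have hclosed : ∀ a b, ((parentGraph p).deleteEdges {s(p v, v)}).Adj a b →
        a ∈ {w | ∃ k, p^[k] w = v} → b ∈ {w | ∃ k, p^[k] w = v} := by
      rintro a b hab ⟨k, hk⟩
      obtain ⟨⟨-, hpa | hpb⟩, hne⟩ := deleteEdges_adj.1 hab
      · rcases k with _ | k
        · rw [Function.iterate_zero_apply] at hk
          subst hk hpa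
          exact absurd Sym2.eq_swap hne
        · exact ⟨k, by rwa [Function.iterate_succ_apply, hpa] at hk⟩
      · exact ⟨k + 1, by rw [Function.iterate_succ_apply, hpb, hk]⟩
    obtain ⟨k, hk⟩ := hreach.mem_of_adj_closed hclosed ⟨0, rfl⟩
    have := hmono k (p v)
    rw [hk] at this
    exact absurd (hr v hv) this.not_gt
  refine isAcyclic_iff_forall_adj_isBridge.2 fun u v huv => isBridge_iff.2 ?_
  rcases (fromRel_adj _ _ _).1 huv with ⟨hne, rfl | rfl⟩
  · rw [Sym2.eq_swap]
    exact key u (Ne.symm hne)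
  · exact fun h => key v hne h.symm

end SimpleGraph

open SimpleGraph

section Parsimony

variable {n : ℕ} (T : PhyloTree n)

theorem exists_changingNumber_eq_ps (f : Fin n → Bool) :
    ∃ g, (∀ i, g (T.leaf i) = f i) ∧ changingNumber T g = ps f T := by
  have hext : ∀ i, Function.extend T.leaf f (fun _ => false) (T.leaf i) = f i :=
    T.leaf_inj.extend_apply _ _
  exact Nat.sInf_mem (s := {m | ∃ g : Fin (2 * n - 2) → Bool,
    (∀ i, g (T.leaf i) = f i) ∧ changingNumber T g = m}) ⟨_, _, hext, rfl⟩

theorem ps_le_changingNumber {f : Fin n → Bool} {g : Fin (2 * n - 2) → Bool}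
    (hg : ∀ i, g (T.leaf i) = f i) : ps f T ≤ changingNumber T g :=
  Nat.sInf_le ⟨g, hg, rfl⟩

theorem ps_eq_zero_of_forall_eq {f : Fin n → Bool} {b : Bool} (hf : ∀ i, f i = b) :
    ps f T = 0 :=
  Nat.eq_zero_of_le_zero <| (ps_le_changingNumber T (g := fun _ => b) fun i => (hf i).symm).trans
    (by simp [changingNumber])

theorem one_le_ps {f : Fin n → Bool} (hf : ¬∃ b, ∀ i, f i = b) : 1 ≤ ps f T := by
  obtain ⟨g, hg, hps⟩ := exists_changingNumber_eq_ps T f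
  refine Nat.one_le_iff_ne_zero.2 fun h0 => hf ?_
  rw [h0, changingNumber, Set.ncard_eq_zero (Set.toFinite _)] at hps
  have hconst : ∀ a b, T.adj.Adj a b → g a = g b := fun a b hab => by
    by_contra hne
    exact hps.subset ⟨T.adj.mem_edgeSet.2 hab, a, b, rfl, hne⟩
  obtain ⟨i₀⟩ : Nonempty (Fin n) := by
    by_contra h
    exact hf ⟨false, fun i => absurd ⟨i⟩ h⟩
  exact ⟨f i₀, fun i => by
    rw [← hg, ← hg, (T.connected _ _).eq_of_forall_adj fun a b hab _ => hconst a b hab]⟩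

theorem exists_extension_of_ps_eq_one {f : Fin n → Bool} (h : ps f T = 1) :
    ∃ (g : Fin (2 * n - 2) → Bool) (u v : Fin (2 * n - 2)), (∀ i, g (T.leaf i) = f i) ∧
      T.adj.Adj u v ∧ g u ≠ g v ∧ ∀ a b, T.adj.Adj a b → g a ≠ g b → s(a, b) = s(u, v) := by
  obtain ⟨g, hg, hps⟩ := exists_changingNumber_eq_ps T f
  rw [h, changingNumber, Set.ncard_eq_one] at hps
  obtain ⟨e, he⟩ := hps
  obtain ⟨hadj, u, v, rfl, hne⟩ := (Set.ext_iff.1 he _).2 rfl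
  refine ⟨g, u, v, hg, T.adj.mem_edgeSet.1 hadj, hne, fun a b hab hab' => ?_⟩
  exact (Set.ext_iff.1 he _).1 ⟨T.adj.mem_edgeSet.2 hab, a, b, rfl, hab'⟩

theorem charCompatible_iff {f₁ f₂ : Fin n → Bool} :
    CharCompatible f₁ f₂ ↔ ∃ b₁ b₂, ∀ i, ¬(f₁ i = b₁ ∧ f₂ i = b₂) := by
  simp [CharCompatible, Set.eq_empty_iff_forall_notMem, Bool.exists_bool, or_assoc]

/-- `g₂` is constant on the `v`-side of `u — v`, which contains every leaf with `g₁ = g₁ v`. -/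
theorem charCompatible_of_not_reachable {f₁ f₂ : Fin n → Bool} {g₁ g₂ : Fin (2 * n - 2) → Bool}
    {u v u' v' : Fin (2 * n - 2)} (hg₁ : ∀ i, g₁ (T.leaf i) = f₁ i)
    (hg₂ : ∀ i, g₂ (T.leaf i) = f₂ i) (hne : g₁ u ≠ g₁ v)
    (hch₁ : ∀ a b, T.adj.Adj a b → g₁ a ≠ g₁ b → s(a, b) = s(u, v))
    (hch₂ : ∀ a b, T.adj.Adj a b → g₂ a ≠ g₂ b → s(a, b) = s(u', v'))
    (hfar : ¬(T.adj.deleteEdges {s(u, v)}).Reachable v u') : CharCompatible f₁ f₂ := by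
  have hconst : ∀ w, (T.adj.deleteEdges {s(u, v)}).Reachable v w → g₂ v = g₂ w :=
    fun w hw => hw.eq_of_forall_adj fun a b hab hva => by
      by_contra hne₂
      rcases Sym2.eq_iff.1 (hch₂ a b (deleteEdges_adj.1 hab).1 hne₂) with ⟨rfl, -⟩ | ⟨-, rfl⟩
      exacts [hfar hva, hfar (hva.trans hab.reachable)]
  refine charCompatible_iff.2 ⟨g₁ v, !g₂ v, fun i ⟨hi₁, hi₂⟩ => ?_⟩
  have := hconst _ (T.connected.reachable_deleteEdges_of_eq hne hch₁ ((hg₁ i).trans hi₁))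
  rw [hg₂, hi₂] at this
  exact Bool.not_ne_self _ this.symm

theorem charCompatible_of_ps_eq_one {f₁ f₂ : Fin n → Bool} (h₁ : ps f₁ T = 1)
    (h₂ : ps f₂ T = 1) : CharCompatible f₁ f₂ := by
  obtain ⟨g₁, u, v, hg₁, huv, hne, hch₁⟩ := exists_extension_of_ps_eq_one T h₁
  obtain ⟨g₂, u', v', hg₂, -, -, hch₂⟩ := exists_extension_of_ps_eq_one T h₂
  have hsep := isBridge_iff.1 (isAcyclic_iff_forall_adj_isBridge.1 T.acyclic huv)
  rcases T.connected.reachable_deleteEdges_or u v u' with hu | hv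
  · exact charCompatible_of_not_reachable T hg₁ hg₂ hne hch₁ hch₂ fun h => hsep (hu.trans h.symm)
  · rw [Sym2.eq_swap (a := u)] at hch₁ hsep hv
    exact charCompatible_of_not_reachable T hg₁ hg₂ hne.symm hch₁ hch₂
      fun h => hsep (hv.trans h.symm).symm

end Parsimony

/-- The caterpillar on the vertices `0, …, 2n - 3`: the spine `0, …, n - 3` is a path rooted
at `0`, and vertex `n - 2 + j` is the `j`-th leaf, hanging from spine vertex `min (j - 1) (n - 3)`.
For `n = 2` there is no spine and the first leaf `0` is the root. -/
def caterpillarParent (n v : ℕ) : ℕ := if v < n - 2 then v - 1 else min (v - (n - 1)) (n - 3)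

theorem caterpillarParent_le (n v : ℕ) : caterpillarParent n v ≤ v := by
  unfold caterpillarParent; split_ifs <;> omega

def caterpillarParentFin (n : ℕ) (v : Fin (2 * n - 2)) : Fin (2 * n - 2) :=
  ⟨caterpillarParent n v, (caterpillarParent_le n v).trans_lt v.2⟩

def caterpillarGraph (n : ℕ) : SimpleGraph (Fin (2 * n - 2)) :=
  parentGraph (caterpillarParentFin n)

theorem caterpillarGraph_connected {n : ℕ} (hn : 2 ≤ n) : (caterpillarGraph n).Connected :=
  have : Nonempty (Fin (2 * n - 2)) := ⟨⟨0, by omega⟩⟩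
  parentGraph_connected (r := Fin.val)
    (fun v hv => lt_of_le_of_ne (caterpillarParent_le n v) (fun h => hv (Fin.ext h)))
    (fun u v hu hv => by
      simp only [caterpillarParentFin, Fin.ext_iff, caterpillarParent] at hu hv
      have := u.2; have := v.2
      ext; split_ifs at hu hv <;> omega)

theorem caterpillarGraph_isAcyclic (n : ℕ) : (caterpillarGraph n).IsAcyclic :=
  parentGraph_isAcyclic (r := Fin.val)
    (fun v hv => lt_of_le_of_ne (caterpillarParent_le n v) (fun h => hv (Fin.ext h)))

theorem val_image_neighborSet_caterpillarGraph (n : ℕ) (v : Fin (2 * n - 2)) :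
    Fin.val '' (caterpillarGraph n).neighborSet v =
      {k | k < 2 * n - 2 ∧ v ≠ k ∧ (caterpillarParent n v = k ∨ caterpillarParent n k = v)} := by
  ext k
  simp only [Set.mem_image, mem_neighborSet, caterpillarGraph, caterpillarParentFin, parentGraph,
    fromRel_adj, ne_eq, Fin.ext_iff, Set.mem_ofPred_eq]
  constructor
  · rintro ⟨w, ⟨hne, h⟩, rfl⟩
    exact ⟨w.2, hne, h⟩
  · rintro ⟨hk, hne, h⟩
    exact ⟨⟨k, hk⟩, ⟨hne, h⟩, rfl⟩

theorem ncard_neighborSet_caterpillarGraph (n : ℕ) (v : Fin (2 * n - 2)) :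
    ((caterpillarGraph n).neighborSet v).ncard = if (v : ℕ) < n - 2 then 3 else 1 := by
  rw [← Set.ncard_image_of_injective _ Fin.val_injective,
    val_image_neighborSet_caterpillarGraph]
  have := v.2
  split_ifs with hv
  · -- a spine vertex: its two spine (or end-leaf) neighbours and the leaf `v + n - 1`
    refine Set.ncard_eq_three.2 ⟨if (v : ℕ) = 0 then n - 2 else v - 1,
      if (v : ℕ) = n - 3 then 2 * n - 3 else v + 1, v + n - 1, ?_, ?_, ?_, ?_⟩
    all_goals try (split_ifs <;> omega)
    ext k
    simp only [Set.mem_ofPred_eq, Set.mem_insert_iff, Set.mem_singleton_iff, caterpillarParent]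
    split_ifs <;> omega
  · refine Set.ncard_eq_one.2 ⟨if n = 2 then 1 - v else caterpillarParent n v, ?_⟩
    ext k
    simp only [Set.mem_ofPred_eq, Set.mem_singleton_iff, caterpillarParent]
    split_ifs <;> omega

def caterpillar {n : ℕ} (hn : 2 ≤ n) (σ : Equiv.Perm (Fin n)) : PhyloTree n where
  adj := caterpillarGraph n
  connected := caterpillarGraph_connected hn
  acyclic := caterpillarGraph_isAcyclic n
  degOneOrThree v := by rw [ncard_neighborSet_caterpillarGraph]; split_ifs <;> simp
  leaf i := ⟨n - 2 + σ i, by omega⟩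
  leaf_inj i j h := σ.injective (Fin.ext (by simpa using h))
  leaf_range v := by
    rw [ncard_neighborSet_caterpillarGraph]
    constructor
    · intro h
      have hv : n - 2 ≤ (v : ℕ) := by split_ifs at h with hv <;> omega
      refine ⟨σ.symm ⟨v - (n - 2), by omega⟩, Fin.ext ?_⟩
      show n - 2 + (σ (σ.symm _) : ℕ) = v
      rw [Equiv.apply_symm_apply, Fin.val_mk]
      omega
    · rintro ⟨i, rfl⟩
      simp

theorem changingNumber_le_of_adj_eq_parentGraph {n : ℕ} (T : PhyloTree n)
    {p : Fin (2 * n - 2) → Fin (2 * n - 2)} (hT : T.adj = parentGraph p)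
    (g : Fin (2 * n - 2) → Bool) : changingNumber T g ≤ {v | g v ≠ g (p v)}.ncard := by
  refine (Set.ncard_le_ncard (t := (fun v => s(v, p v)) '' {v | g v ≠ g (p v)}) ?_
    (Set.toFinite _)).trans (Set.ncard_image_le (Set.toFinite _))
  rintro _ ⟨he, u, v, rfl, hne⟩
  rw [SimpleGraph.mem_edgeSet, hT, parentGraph, fromRel_adj] at he
  rcases he.2 with rfl | rfl
  · exact ⟨u, hne, rfl⟩
  · exact ⟨v, hne.symm, Sym2.eq_swap⟩

/-- The position of the leaf whose colour vertex `v` copies: a leaf is its own, and spine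
vertex `v` copies the leaf `v + 1` hanging from it. -/
def leafPos (n v : ℕ) : ℕ := if v < n - 2 then v + 1 else v - (n - 2)

/-- The vertex whose parent edge joins the leaf positions `k` and `k + 1` of the caterpillar. -/
def switchVertex (n k : ℕ) : ℕ := if k = n - 2 then 2 * n - 3 else if k = 0 then n - 2 else k

theorem leafPos_caterpillarParent {n v : ℕ} (hn : 2 ≤ n) (hv : v < 2 * n - 2)
    (hne : leafPos n v ≠ leafPos n (caterpillarParent n v)) :
    ∃ k, k + 1 < n ∧ switchVertex n k = v ∧
      (leafPos n v = k ∧ leafPos n (caterpillarParent n v) = k + 1 ∨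
        leafPos n v = k + 1 ∧ leafPos n (caterpillarParent n v) = k) := by
  refine ⟨min (leafPos n v) (leafPos n (caterpillarParent n v)), ?_⟩
  unfold leafPos caterpillarParent switchVertex at *
  split_ifs at * <;> omega

theorem ps_caterpillar_le {n : ℕ} (hn : 2 ≤ n) (σ : Equiv.Perm (Fin n)) {f : Fin n → Bool}
    {h : ℕ → Bool} (hh : ∀ i, h (σ i) = f i) :
    ps f (caterpillar hn σ) ≤ {k | k + 1 < n ∧ h k ≠ h (k + 1)}.ncard := by
  set S := {k | k + 1 < n ∧ h k ≠ h (k + 1)}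
  set g : Fin (2 * n - 2) → Bool := fun v => h (leafPos n v)
  have hg : ∀ i, g ((caterpillar hn σ).leaf i) = f i := fun i => by
    simp only [g, caterpillar, leafPos]
    rw [if_neg (by omega), ← hh]
    congr 1
    omega
  have hsub : Fin.val '' {v | g v ≠ g (caterpillarParentFin n v)} ⊆ switchVertex n '' S := by
    rintro _ ⟨v, hne, rfl⟩
    obtain ⟨k, hk, hv, hpos | hpos⟩ :=
      leafPos_caterpillarParent hn v.2 fun heq => hne (congrArg h heq)
    · exact ⟨k, ⟨hk, by simpa [g, caterpillarParentFin, hpos.1, hpos.2] using hne⟩, hv⟩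
    · exact ⟨k, ⟨hk, by simpa [g, caterpillarParentFin, hpos.1, hpos.2, eq_comm] using hne⟩, hv⟩
  have hS : S.Finite := (Set.finite_Iio n).subset fun k hk => Set.mem_Iio.2 (by have := hk.1; omega)
  calc ps f (caterpillar hn σ)
      ≤ changingNumber (caterpillar hn σ) g := ps_le_changingNumber _ hg
    _ ≤ {v | g v ≠ g (caterpillarParentFin n v)}.ncard :=
        changingNumber_le_of_adj_eq_parentGraph _ rfl g
    _ = (Fin.val '' {v | g v ≠ g (caterpillarParentFin n v)}).ncard :=
        (Set.ncard_image_of_injective _ Fin.val_injective).symm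
    _ ≤ (switchVertex n '' S).ncard := Set.ncard_le_ncard hsub (hS.image _)
    _ ≤ S.ncard := Set.ncard_image_le hS

def switches (P : ℕ → Bool) : Set ℕ := {m | P m ≠ P (m + 1)}

theorem exists_mem_switches_of_ne {P : ℕ → Bool} {a b : ℕ} (hab : a ≤ b) (h : P a ≠ P b) :
    ∃ m ∈ switches P, a ≤ m ∧ m < b := by
  induction b, hab using Nat.le_induction with
  | base => exact absurd rfl h
  | succ b hab ih =>
    by_cases hb : P a = P b
    · exact ⟨b, fun h' => h (hb.trans h'), hab, b.lt_succ_self⟩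
    · obtain ⟨m, hm, ham, hmb⟩ := ih hb
      exact ⟨m, hm, ham, hmb.trans b.lt_succ_self⟩

theorem ncard_switches_comp_le {P : ℕ → Bool} (hP : (switches P).Finite) {w : ℕ → ℕ} {N : ℕ}
    (hw : MonotoneOn w (Set.Iio N)) :
    {k | k + 1 < N ∧ P (w k) ≠ P (w (k + 1))}.ncard ≤ (switches P).ncard := by
  have hex : ∀ k, ∃ m, k + 1 < N ∧ P (w k) ≠ P (w (k + 1)) →
      m ∈ switches P ∧ w k ≤ m ∧ m < w (k + 1) := fun k => by
    by_cases hk : k + 1 < N ∧ P (w k) ≠ P (w (k + 1))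
    · obtain ⟨m, hm⟩ := exists_mem_switches_of_ne
        (hw (Set.mem_Iio.2 (by omega)) (Set.mem_Iio.2 hk.1) k.le_succ) hk.2
      exact ⟨m, fun _ => hm⟩
    · exact ⟨0, fun h => absurd h hk⟩
  choose m hm using hex
  -- the switches chosen inside the disjoint intervals `[w k, w (k + 1))` are distinct
  have hlt : ∀ k ∈ {k | k + 1 < N ∧ P (w k) ≠ P (w (k + 1))},
      ∀ k' ∈ {k | k + 1 < N ∧ P (w k) ≠ P (w (k + 1))}, k < k' → m k < m k' := by
    intro k hk k' hk' hkk'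
    calc m k < w (k + 1) := (hm k hk).2.2
      _ ≤ w k' := hw (Set.mem_Iio.2 hk.1) (Set.mem_Iio.2 (by have := hk'.1; omega)) hkk'
      _ ≤ m k' := (hm k' hk').2.1
  refine Set.ncard_le_ncard_of_injOn m (fun k hk => (hm k hk).1) (fun k hk k' hk' heq => ?_) hP
  rcases lt_trichotomy k k' with h | h | h
  exacts [absurd heq (hlt k hk k' hk' h).ne, h, absurd heq (hlt k' hk' k hk h).ne']

theorem exists_ps_le_ncard_of_switches_subset {n : ℕ} (hn : 2 ≤ n) (key : Fin n → ℕ) :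
    ∃ T : PhyloTree n, ∀ (f : Fin n → Bool) (P : ℕ → Bool), (∀ i, f i = P (key i)) →
      ∀ {s : Set ℕ}, s.Finite → switches P ⊆ s → ps f T ≤ s.ncard := by
  set w : ℕ → ℕ := fun k => if hk : k < n then key (Tuple.sort key ⟨k, hk⟩) else 0
  have hw : MonotoneOn w (Set.Iio n) := fun a ha b hb hab => by
    simp only [w, dif_pos (Set.mem_Iio.1 ha), dif_pos (Set.mem_Iio.1 hb)]
    exact Tuple.monotone_sort key (show (⟨a, ha⟩ : Fin n) ≤ ⟨b, hb⟩ from hab)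
  refine ⟨caterpillar hn (Tuple.sort key).symm, fun f P hf s hs hPs => ?_⟩
  calc ps f (caterpillar hn (Tuple.sort key).symm)
      ≤ {k | k + 1 < n ∧ P (w k) ≠ P (w (k + 1))}.ncard :=
        ps_caterpillar_le hn _ (h := P ∘ w) fun i => by simp [w, hf]
    _ ≤ (switches P).ncard := ncard_switches_comp_le (hs.subset hPs) hw
    _ ≤ s.ncard := Set.ncard_le_ncard hPs hs

theorem switches_ite (t : ℕ) {a b : Bool} (hab : a ≠ b) :
    switches (fun m => if t < m then a else b) = {t} := by
  ext m
  cases a <;> cases b <;> simp_all [switches] <;> omega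

section UpperBounds

variable {n : ℕ}

theorem exists_ps_le_one (hn : 2 ≤ n) (f : Fin n → Bool) : ∃ T : PhyloTree n, ps f T ≤ 1 := by
  obtain ⟨T, hT⟩ := exists_ps_le_ncard_of_switches_subset hn fun i => (f i).toNat
  refine ⟨T, (hT f _ (fun i => ?_) (Set.finite_singleton 0)
    (switches_ite 0 (by decide : true ≠ false)).subset).trans_eq (Set.ncard_singleton 0)⟩
  cases f i <;> rfl

theorem exists_ps_le_one_of_charCompatible (hn : 2 ≤ n) {f₁ f₂ : Fin n → Bool}
    (h : CharCompatible f₁ f₂) : ∃ T : PhyloTree n, ps f₁ T ≤ 1 ∧ ps f₂ T ≤ 1 := by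
  obtain ⟨a, b, hab⟩ := charCompatible_iff.1 h
  -- sort the leaves as `f₂ = b`, then `f₁ ≠ a, f₂ ≠ b`, then `f₁ = a` (which forces `f₂ ≠ b`)
  obtain ⟨T, hT⟩ := exists_ps_le_ncard_of_switches_subset hn fun i =>
    if f₁ i = a then 2 else if f₂ i = b then 0 else 1
  refine ⟨T, (hT f₁ _ (fun i => ?_) (Set.finite_singleton 1)
      (switches_ite 1 (Bool.not_ne_self a).symm).subset).trans_eq (Set.ncard_singleton 1),
    (hT f₂ _ (fun i => ?_) (Set.finite_singleton 0)
      (switches_ite 0 (Bool.not_ne_self b)).subset).trans_eq (Set.ncard_singleton 0)⟩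
  all_goals
    have := hab i
    revert this
    cases a <;> cases b <;> cases f₁ i <;> cases f₂ i <;> simp

theorem exists_ps_le_one_ps_le_two (hn : 2 ≤ n) (f₁ f₂ : Fin n → Bool) :
    ∃ T : PhyloTree n, ps f₁ T ≤ 1 ∧ ps f₂ T ≤ 2 := by
  -- sort the leaves by the state pair `(f₁, f₂)` in the order `00, 01, 11, 10`
  obtain ⟨T, hT⟩ := exists_ps_le_ncard_of_switches_subset hn fun i =>
    if f₁ i then (if f₂ i then 2 else 3) else (if f₂ i then 1 else 0)
  have hP₂ : switches (fun m => decide (0 < m ∧ m < 3)) ⊆ {0, 2} := fun m hm => by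
    simp only [switches, Set.mem_ofPred_eq, ne_eq, decide_eq_decide] at hm
    simp only [Set.mem_insert_iff, Set.mem_singleton_iff]
    omega
  refine ⟨T, (hT f₁ _ (fun i => ?_) (Set.finite_singleton 1)
      (switches_ite 1 (by decide : true ≠ false)).subset).trans_eq (Set.ncard_singleton 1),
    (hT f₂ _ (fun i => ?_) (Set.toFinite _) hP₂).trans_eq (Set.ncard_pair (by decide))⟩
  all_goals cases f₁ i <;> cases f₂ i <;> rfl

end UpperBounds

theorem sInf_setOf_eq_of_forall_le {α : Type*} {F : α → ℕ} {c : ℕ} (hlow : ∀ a, c ≤ F a)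
    (hup : ∃ a, F a ≤ c) : sInf {m | ∃ a, F a = m} = c := by
  obtain ⟨a, ha⟩ := hup
  exact IsLeast.csInf_eq ⟨⟨a, le_antisymm ha (hlow a)⟩, by rintro _ ⟨b, rfl⟩; exact hlow b⟩

/-- The minimum, over all binary phylogenetic trees T on {1,…,n}, of the total
parsimony score of a pair of characters is: 0 if both are constant; 1 if exactly
one is constant; 2 if both are non-constant and compatible with each other;
3 if both are non-constant and incompatible with each other. -/
theorem stmt13 (n : ℕ) (hn : 2 ≤ n) (f₁ f₂ : Fin n → Bool) :
    (((∃ b, ∀ i, f₁ i = b) ∧ (∃ b, ∀ i, f₂ i = b)) →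
      sInf {m | ∃ T : PhyloTree n, ps f₁ T + ps f₂ T = m} = 0) ∧
    (((∃ b, ∀ i, f₁ i = b) ∧ ¬ (∃ b, ∀ i, f₂ i = b) ∨
        ¬ (∃ b, ∀ i, f₁ i = b) ∧ (∃ b, ∀ i, f₂ i = b)) →
      sInf {m | ∃ T : PhyloTree n, ps f₁ T + ps f₂ T = m} = 1) ∧
    ((¬ (∃ b, ∀ i, f₁ i = b) ∧ ¬ (∃ b, ∀ i, f₂ i = b) ∧ CharCompatible f₁ f₂) →
      sInf {m | ∃ T : PhyloTree n, ps f₁ T + ps f₂ T = m} = 2) ∧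
    ((¬ (∃ b, ∀ i, f₁ i = b) ∧ ¬ (∃ b, ∀ i, f₂ i = b) ∧ ¬ CharCompatible f₁ f₂) →
      sInf {m | ∃ T : PhyloTree n, ps f₁ T + ps f₂ T = m} = 3) := by
  refine ⟨?_, ?_, ?_, ?_⟩
  · rintro ⟨⟨b₁, h₁⟩, ⟨b₂, h₂⟩⟩
    refine sInf_setOf_eq_of_forall_le (fun _ => Nat.zero_le _) ⟨caterpillar hn 1, ?_⟩
    rw [ps_eq_zero_of_forall_eq _ h₁, ps_eq_zero_of_forall_eq _ h₂]
  · rintro (⟨⟨b, h₁⟩, h₂⟩ | ⟨h₁, ⟨b, h₂⟩⟩)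
    · obtain ⟨T, hT⟩ := exists_ps_le_one hn f₂
      refine sInf_setOf_eq_of_forall_le (fun T => (one_le_ps T h₂).trans le_add_self) ⟨T, ?_⟩
      rwa [ps_eq_zero_of_forall_eq T h₁, zero_add]
    · obtain ⟨T, hT⟩ := exists_ps_le_one hn f₁
      refine sInf_setOf_eq_of_forall_le (fun T => (one_le_ps T h₁).trans le_self_add) ⟨T, ?_⟩
      rwa [ps_eq_zero_of_forall_eq T h₂, add_zero]
  · rintro ⟨h₁, h₂, hc⟩
    obtain ⟨T, hT₁, hT₂⟩ := exists_ps_le_one_of_charCompatible hn hc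
    exact sInf_setOf_eq_of_forall_le (fun T => add_le_add (one_le_ps T h₁) (one_le_ps T h₂))
      ⟨T, add_le_add hT₁ hT₂⟩
  · rintro ⟨h₁, h₂, hc⟩
    obtain ⟨T, hT₁, hT₂⟩ := exists_ps_le_one_ps_le_two hn f₁ f₂
    refine sInf_setOf_eq_of_forall_le (fun T => ?_) ⟨T, add_le_add hT₁ hT₂⟩
    have := one_le_ps T h₁
    have := one_le_ps T h₂
    by_contra hlt
    exact hc (charCompatible_of_ps_eq_one T (by omega) (by omega))
end

section
/- Let 2 ≤ n ≤ 5 and k ≥ 1. Then for every pair of binary phylogenetic trees T, T' on leaf set {1,…,n}, the number of k-tuples (f_1,…,f_k) of characters for which T is a maximum parsimony tree equals the number of k-tuples for which T' is a maximum parsimony tree. That is, for at most five leaves, the probability of being a maximum parsimony tree for k uniformly random two-state characters is the same for every tree in UB(n). -/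
open Classical

/-!
For `n ≤ 5` all binary trees with `n` leaves have the same shape, a caterpillar, so any two trees
in `UB(n)` differ only by a permutation `π` of the leaf labels. Parsimony scores are invariant
under graph isomorphism and under relabelling the tree and the characters by the same `π`, so
`F ↦ (F i ∘ π⁻¹)ᵢ` is a bijection between the tuples for which the two trees are MP trees.

The common shape is found by mapping a fixed caterpillar into the tree by a homomorphism that is
injective on every neighbourhood: its image of a path never backtracks, so in a forest it is again
a path, which makes the map injective and then, by counting vertices, an isomorphism.
-/

open SimpleGraph

namespace SimpleGraph

variable {V W : Type*} {H : SimpleGraph V} {G : SimpleGraph W}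

def Hom.IsLocallyInjective (f : H →g G) : Prop :=
  ∀ v, Set.InjOn f (H.neighborSet v)

namespace Hom.IsLocallyInjective

variable {f : H →g G}

theorem isPath_map (hf : f.IsLocallyInjective) (hG : G.IsAcyclic) :
    ∀ {u v : V} {p : H.Walk u v}, p.IsPath → (p.map f).IsPath
  | _, _, .nil, _ => by simp
  | _, _, .cons hadj q, hp => by
    rw [Walk.cons_isPath_iff] at hp
    have hq := isPath_map hf hG hp.1
    refine (Walk.cons_isPath_iff _ _).2 ⟨hq, fun hmem => ?_⟩
    have hsnd := hG.eq_snd_of_adj_start hq (f.map_adj hadj).symm hmem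
    cases q with
    | nil => exact (f.map_adj hadj).ne hsnd
    | cons hadj' q' =>
      rw [Walk.map_cons, Walk.snd_cons] at hsnd
      obtain rfl := hf _ hadj.symm hadj' hsnd
      exact hp.2 (by simp)

theorem injective (hf : f.IsLocallyInjective) (hH : H.Preconnected) (hG : G.IsAcyclic) :
    Function.Injective f := by
  intro u v huv
  obtain ⟨p, hp⟩ := hH.exists_isPath u v
  cases p with
  | nil => rfl
  | cons hadj q =>
    have := (Walk.cons_isPath_iff _ _).1 (hf.isPath_map hG hp)
    exact (this.2 (by rw [huv]; exact (q.map f).end_mem_support)).elim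

end Hom.IsLocallyInjective

theorem Hom.map_adj_iff_of_injective (f : H →g G) (hf : Function.Injective f)
    (hH : H.Preconnected) (hG : G.IsAcyclic) {u v : V} : G.Adj (f u) (f v) ↔ H.Adj u v := by
  refine ⟨fun hadj => ?_, f.map_adj⟩
  obtain ⟨p, hp⟩ := hH.exists_isPath u v
  have hsnd := hG.eq_snd_of_adj_start (hp.map hf) hadj (p.map f).end_mem_support
  cases p with
  | nil => exact (hadj.ne rfl).elim
  | cons h q =>
    rw [Walk.map_cons, Walk.snd_cons, hf.eq_iff] at hsnd
    exact hsnd ▸ h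

theorem Hom.IsLocallyInjective.nonempty_iso [Finite W] {f : H →g G}
    (hf : f.IsLocallyInjective) (hH : H.Preconnected) (hG : G.IsAcyclic)
    (hcard : Nat.card W ≤ Nat.card V) : Nonempty (H ≃g G) :=
  have hinj := hf.injective hH hG
  ⟨⟨Equiv.ofBijective f (hinj.bijective_of_nat_card_le hcard),
    f.map_adj_iff_of_injective hinj hH hG⟩⟩

theorem Preconnected.exists_adj_of_ne_univ (hG : G.Preconnected) {s : Set W} (hs : s.Nonempty)
    (hs' : s ≠ Set.univ) : ∃ u ∈ s, ∃ v ∉ s, G.Adj u v := by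
  obtain ⟨u, hu⟩ := hs
  obtain ⟨v, hv⟩ := (Set.ne_univ_iff_exists_notMem s).1 hs'
  obtain ⟨d, -, hd₁, hd₂⟩ := (hG u v).some.exists_boundary_dart s hu hv
  exact ⟨d.fst, hd₁, d.snd, hd₂, d.adj⟩

theorem exists_adj_ne_ne {v : W} (hv : 2 < (G.neighborSet v).ncard) (a b : W) :
    ∃ w, G.Adj v w ∧ w ≠ a ∧ w ≠ b := by
  have hab : ({a, b} : Set W).ncard ≤ 2 := (Set.ncard_insert_le a {b}).trans (by simp)
  obtain ⟨w, hw, hwab⟩ := Set.exists_mem_notMem_of_ncard_lt_ncard (hab.trans_lt hv)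
  simp only [Set.mem_insert_iff, Set.mem_singleton_iff, not_or] at hwab
  exact ⟨w, hw, hwab⟩

end SimpleGraph

theorem Sym2.exists_mk_eq_and_ne_iff {α β : Type*} (h : α → β) (x y : α) :
    (∃ u v, s(x, y) = s(u, v) ∧ h u ≠ h v) ↔ h x ≠ h y := by
  refine ⟨?_, fun hxy => ⟨x, y, rfl, hxy⟩⟩
  rintro ⟨u, v, huv, hne⟩
  rcases Sym2.eq_iff.1 huv with ⟨rfl, rfl⟩ | ⟨rfl, rfl⟩
  exacts [hne, hne.symm]

def caterpillar2 : SimpleGraph (Fin 2) :=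
  fromEdgeSet {s(0, 1)}

def caterpillar3 : SimpleGraph (Fin 4) :=
  fromEdgeSet {s(0, 1), s(0, 2), s(0, 3)}

def caterpillar4 : SimpleGraph (Fin 6) :=
  fromEdgeSet {s(0, 1), s(0, 2), s(0, 3), s(1, 4), s(1, 5)}

def caterpillar5 : SimpleGraph (Fin 8) :=
  fromEdgeSet {s(0, 1), s(1, 2), s(0, 3), s(0, 4), s(1, 5), s(2, 6), s(2, 7)}

theorem caterpillar2_connected : caterpillar2.Connected := by
  refine (connected_iff_exists_forall_reachable _).2 ⟨0, fun v => ?_⟩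
  fin_cases v
  exacts [.rfl, Adj.reachable (by simp [caterpillar2])]

theorem caterpillar3_connected : caterpillar3.Connected := by
  refine (connected_iff_exists_forall_reachable _).2 ⟨0, fun v => ?_⟩
  fin_cases v
  exacts [.rfl, Adj.reachable (by simp [caterpillar3]), Adj.reachable (by simp [caterpillar3]),
    Adj.reachable (by simp [caterpillar3])]

theorem caterpillar4_connected : caterpillar4.Connected := by
  have h1 : caterpillar4.Reachable 0 1 := Adj.reachable (by simp [caterpillar4])
  refine (connected_iff_exists_forall_reachable _).2 ⟨0, fun v => ?_⟩
  fin_cases v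
  exacts [.rfl, h1, Adj.reachable (by simp [caterpillar4]), Adj.reachable (by simp [caterpillar4]),
    h1.trans (Adj.reachable (by simp [caterpillar4])),
    h1.trans (Adj.reachable (by simp [caterpillar4]))]

theorem caterpillar5_connected : caterpillar5.Connected := by
  have h0 : caterpillar5.Reachable 1 0 := Adj.reachable (by simp [caterpillar5])
  have h2 : caterpillar5.Reachable 1 2 := Adj.reachable (by simp [caterpillar5])
  refine (connected_iff_exists_forall_reachable _).2 ⟨1, fun v => ?_⟩
  fin_cases v
  exacts [h0, .rfl, h2, h0.trans (Adj.reachable (by simp [caterpillar5])),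
    h0.trans (Adj.reachable (by simp [caterpillar5])), Adj.reachable (by simp [caterpillar5]),
    h2.trans (Adj.reachable (by simp [caterpillar5])),
    h2.trans (Adj.reachable (by simp [caterpillar5]))]

namespace PhyloTree

variable {n : ℕ}

theorem changingNumber_comp_iso {T T' : PhyloTree n} (φ : T.adj ≃g T'.adj)
    (g : Fin (2 * n - 2) → Bool) : changingNumber T (g ∘ φ) = changingNumber T' g := by
  unfold changingNumber
  conv_rhs => rw [← Set.ncard_preimage_of_injective_subset_range (Sym2.map.injective φ.injective)
    fun e _ => ⟨e.map φ.symm, by simp [Sym2.map_map]⟩]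
  congr 1
  ext e
  induction e using Sym2.ind with
  | _ x y =>
    simp only [Set.mem_ofPred_eq, Set.mem_preimage, Sym2.map_mk, mem_edgeSet, φ.map_adj_iff,
      Sym2.exists_mk_eq_and_ne_iff, Function.comp_apply]

theorem ps_eq_of_iso {T T' : PhyloTree n} (φ : T.adj ≃g T'.adj)
    (hφ : ∀ i, φ (T.leaf i) = T'.leaf i) (f : Fin n → Bool) : ps f T = ps f T' := by
  have hφ' : ∀ i, φ.symm (T'.leaf i) = T.leaf i := fun i => by
    rw [← hφ, RelIso.symm_apply_apply]
  unfold ps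
  congr 1
  ext m
  constructor
  · rintro ⟨g, hg, rfl⟩
    refine ⟨g ∘ φ.symm, fun i => by simp [hφ', hg], ?_⟩
    rw [← changingNumber_comp_iso φ]
    simp [Function.comp_def]
  · rintro ⟨g, hg, rfl⟩
    exact ⟨g ∘ φ, fun i => by simp [hφ, hg], changingNumber_comp_iso φ g⟩

theorem exists_perm_map_leaf {T T' : PhyloTree n} (φ : T.adj ≃g T'.adj) :
    ∃ π : Equiv.Perm (Fin n), ∀ i, φ (T.leaf (π i)) = T'.leaf i := by
  have hleaf : ∀ i, ∃ j, T.leaf j = φ.symm (T'.leaf i) := fun i => by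
    rw [← T.leaf_range, ← φ.symm.image_neighborSet,
      Set.ncard_image_of_injective _ φ.symm.injective, T'.leaf_range]
    exact ⟨i, rfl⟩
  choose σ hσ using hleaf
  have hinj : Function.Injective σ := fun i j h =>
    T'.leaf_inj (φ.symm.injective (by rw [← hσ, ← hσ, h]))
  exact ⟨Equiv.ofBijective σ (Finite.injective_iff_bijective.1 hinj), fun i => by simp [hσ]⟩

def relabel (T : PhyloTree n) (π : Equiv.Perm (Fin n)) : PhyloTree n :=
  { T with
    leaf := T.leaf ∘ π
    leaf_inj := T.leaf_inj.comp π.injective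
    leaf_range := fun v =>
      (T.leaf_range v).trans (π.exists_congr_right (q := (T.leaf · = v))).symm }

theorem ps_relabel (T : PhyloTree n) (π : Equiv.Perm (Fin n)) (f : Fin n → Bool) :
    ps f (T.relabel π) = ps (f ∘ π.symm) T := by
  unfold ps
  congr 1
  ext m
  refine exists_congr fun g => and_congr ?_ Iff.rfl
  exact π.forall_congr_left.trans (forall_congr' fun i => by simp [relabel])

theorem isMPTree_relabel_iff {k : ℕ} (T : PhyloTree n) (π : Equiv.Perm (Fin n))
    (F : Fin k → Fin n → Bool) :
    IsMPTree F (T.relabel π) ↔ IsMPTree (fun i => F i ∘ π.symm) T := by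
  simp only [IsMPTree, ps_relabel]
  refine ⟨fun h S => by simpa [ps_relabel] using h (S.relabel π), fun h S => ?_⟩
  simpa [ps_relabel, Function.comp_assoc] using h (S.relabel π.symm)

theorem ncard_setOf_isMPTree_relabel {k : ℕ} (T : PhyloTree n) (π : Equiv.Perm (Fin n)) :
    {F : Fin k → Fin n → Bool | IsMPTree F (T.relabel π)}.ncard =
      {F : Fin k → Fin n → Bool | IsMPTree F T}.ncard := by
  let e := (Equiv.refl (Fin k)).arrowCongr (π.arrowCongr (Equiv.refl Bool))
  have : {F | IsMPTree F (T.relabel π)} = e ⁻¹' {F | IsMPTree F T} := by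
    ext F
    exact isMPTree_relabel_iff T π F
  rw [this, Set.ncard_preimage_of_injective_subset_range e.injective (by simp)]

theorem ncard_setOf_isMPTree_eq_of_iso {k : ℕ} {T T' : PhyloTree n} (φ : T.adj ≃g T'.adj) :
    {F : Fin k → Fin n → Bool | IsMPTree F T}.ncard =
      {F : Fin k → Fin n → Bool | IsMPTree F T'}.ncard := by
  obtain ⟨π, hπ⟩ := exists_perm_map_leaf φ
  have hps := ps_eq_of_iso (T := T.relabel π) φ hπ
  rw [← ncard_setOf_isMPTree_relabel T π]
  simp only [IsMPTree, hps]

section Shape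

variable (T : PhyloTree n)

def IsInternal (v : Fin (2 * n - 2)) : Prop :=
  (T.adj.neighborSet v).ncard = 3

variable {T}

theorem IsInternal.two_lt_ncard {v : Fin (2 * n - 2)} (hv : T.IsInternal v) :
    2 < (T.adj.neighborSet v).ncard := by
  unfold IsInternal at hv
  omega

theorem isInternal_of_adj_of_adj {u v w : Fin (2 * n - 2)} (huv : T.adj.Adj u v)
    (hvw : T.adj.Adj v w) (huw : u ≠ w) : T.IsInternal v := by
  refine (T.degOneOrThree v).resolve_left fun h => huw ?_
  obtain ⟨x, hx⟩ := Set.ncard_eq_one.1 h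
  have hu : u ∈ T.adj.neighborSet v := huv.symm
  have hw : w ∈ T.adj.neighborSet v := hvw
  rw [hx] at hu hw
  exact hu.trans hw.symm

variable (T)

theorem exists_isInternal (hn : 3 ≤ n) : ∃ v, T.IsInternal v := by
  obtain ⟨v, hv⟩ : ∃ v, ∀ i, T.leaf i ≠ v := by
    by_contra! h
    have := Fintype.card_le_of_surjective T.leaf h
    simp only [Fintype.card_fin] at this
    omega
  exact ⟨v, (T.degOneOrThree v).resolve_left fun h => hv _ ((T.leaf_range v).1 h).choose_spec⟩

theorem exists_adj_of_ncard_lt {s : Set (Fin (2 * n - 2))} (hs : s.Nonempty)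
    (hlt : s.ncard < 2 * n - 2) : ∃ u ∈ s, ∃ v ∉ s, T.adj.Adj u v :=
  T.connected.preconnected.exists_adj_of_ne_univ hs fun h => by
    simp [h, Set.ncard_univ] at hlt

/- The closed neighbourhood of an internal vertex `a` has at most `4 < 2n - 2` vertices, so an
edge `uv` leaves it; `u` is a neighbour of `a` with a second neighbour `v`, hence internal. -/
theorem exists_adj_isInternal (hn : 4 ≤ n) :
    ∃ a b, T.adj.Adj a b ∧ T.IsInternal a ∧ T.IsInternal b := by
  obtain ⟨a, ha⟩ := T.exists_isInternal (by omega)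
  have hcard := Set.ncard_insert_le a (T.adj.neighborSet a)
  rw [ha] at hcard
  obtain ⟨u, hu, v, hv, huv⟩ :=
    T.exists_adj_of_ncard_lt (s := insert a (T.adj.neighborSet a)) (Set.insert_nonempty a _)
      (by omega)
  rcases hu with rfl | hau
  · exact (hv (Set.mem_insert_of_mem _ huv)).elim
  · refine ⟨a, u, hau, ha, isInternal_of_adj_of_adj hau huv ?_⟩
    rintro rfl
    exact hv (Set.mem_insert _ _)

theorem exists_isInternal_path (hn : 5 ≤ n) :
    ∃ a b c, T.adj.Adj a b ∧ T.adj.Adj b c ∧ a ≠ c ∧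
      T.IsInternal a ∧ T.IsInternal b ∧ T.IsInternal c := by
  obtain ⟨a, b, hab, ha, hb⟩ := T.exists_adj_isInternal (by omega)
  have hcard := Set.ncard_union_le (T.adj.neighborSet a) (T.adj.neighborSet b)
  rw [ha, hb] at hcard
  obtain ⟨u, hu, v, hv, huv⟩ := T.exists_adj_of_ncard_lt
    (s := T.adj.neighborSet a ∪ T.adj.neighborSet b) ⟨b, Or.inl hab⟩ (by omega)
  rcases hu with hau | hbu
  · have hub : u ≠ b := by rintro rfl; exact hv (Or.inr huv)
    have hav : a ≠ v := by rintro rfl; exact hv (Or.inr hab.symm)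
    exact ⟨u, a, b, hau.symm, hab, hub, isInternal_of_adj_of_adj hau huv hav, ha, hb⟩
  · have hau : a ≠ u := by rintro rfl; exact hv (Or.inl huv)
    have hbv : b ≠ v := by rintro rfl; exact hv (Or.inl hab)
    exact ⟨a, b, u, hab, hbu, hau, ha, hb, isInternal_of_adj_of_adj hbu huv hbv⟩

end Shape

theorem nonempty_iso_caterpillar2 (T : PhyloTree 2) : Nonempty (caterpillar2 ≃g T.adj) := by
  obtain ⟨x, hx⟩ : (T.adj.neighborSet 0).Nonempty :=
    Set.nonempty_of_ncard_ne_zero (by rcases T.degOneOrThree 0 with h | h <;> omega)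
  refine Hom.IsLocallyInjective.nonempty_iso (f := ⟨![0, x], ?_⟩) ?_
    caterpillar2_connected.preconnected T.acyclic (by simp)
  · intro u v h
    simp only [caterpillar2, fromEdgeSet_adj, Set.mem_singleton_iff, Sym2.eq_iff] at h
    rcases h with ⟨⟨rfl, rfl⟩ | ⟨rfl, rfl⟩, -⟩ <;> simp <;>
      first | assumption | exact Adj.symm ‹_›
  · intro v y hy z hz hyz
    simp only [caterpillar2, mem_neighborSet, fromEdgeSet_adj, Set.mem_singleton_iff,
      Sym2.eq_iff] at hy hz
    fin_cases v <;> fin_cases y <;> simp at hy <;> fin_cases z <;> simp at hz <;> simp at hyz ⊢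

theorem nonempty_iso_caterpillar3 (T : PhyloTree 3) : Nonempty (caterpillar3 ≃g T.adj) := by
  obtain ⟨a, ha⟩ := T.exists_isInternal le_rfl
  obtain ⟨p, hap, -⟩ := exists_adj_ne_ne ha.two_lt_ncard a a
  obtain ⟨q, haq, hqp, -⟩ := exists_adj_ne_ne ha.two_lt_ncard p p
  obtain ⟨r, har, hrp, hrq⟩ := exists_adj_ne_ne ha.two_lt_ncard p q
  refine Hom.IsLocallyInjective.nonempty_iso (f := ⟨![a, p, q, r], ?_⟩) ?_
    caterpillar3_connected.preconnected T.acyclic (by simp)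
  · intro u v h
    simp only [caterpillar3, fromEdgeSet_adj, Set.mem_insert_iff, Set.mem_singleton_iff,
      Sym2.eq_iff] at h
    rcases h with ⟨h | h | h, -⟩ <;> rcases h with ⟨rfl, rfl⟩ | ⟨rfl, rfl⟩ <;> simp <;>
      first | assumption | exact Adj.symm ‹_›
  · intro v y hy z hz hyz
    simp only [caterpillar3, mem_neighborSet, fromEdgeSet_adj, Set.mem_insert_iff,
      Set.mem_singleton_iff, Sym2.eq_iff] at hy hz
    fin_cases v <;> fin_cases y <;> simp at hy <;> fin_cases z <;> simp at hz <;>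
      simp at hyz ⊢ <;> simp_all

theorem nonempty_iso_caterpillar4 (T : PhyloTree 4) : Nonempty (caterpillar4 ≃g T.adj) := by
  obtain ⟨a, b, hab, ha, hb⟩ := T.exists_adj_isInternal le_rfl
  obtain ⟨x₁, hax₁, hx₁b, -⟩ := exists_adj_ne_ne ha.two_lt_ncard b b
  obtain ⟨x₂, hax₂, hx₂b, hx₂x₁⟩ := exists_adj_ne_ne ha.two_lt_ncard b x₁
  obtain ⟨y₁, hby₁, hy₁a, -⟩ := exists_adj_ne_ne hb.two_lt_ncard a a
  obtain ⟨y₂, hby₂, hy₂a, hy₂y₁⟩ := exists_adj_ne_ne hb.two_lt_ncard a y₁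
  refine Hom.IsLocallyInjective.nonempty_iso (f := ⟨![a, b, x₁, x₂, y₁, y₂], ?_⟩) ?_
    caterpillar4_connected.preconnected T.acyclic (by simp)
  · intro u v h
    simp only [caterpillar4, fromEdgeSet_adj, Set.mem_insert_iff, Set.mem_singleton_iff,
      Sym2.eq_iff] at h
    rcases h with ⟨h | h | h | h | h, -⟩ <;> rcases h with ⟨rfl, rfl⟩ | ⟨rfl, rfl⟩ <;>
      simp <;> first | assumption | exact Adj.symm ‹_›
  · intro v y hy z hz hyz
    simp only [caterpillar4, mem_neighborSet, fromEdgeSet_adj, Set.mem_insert_iff,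
      Set.mem_singleton_iff, Sym2.eq_iff] at hy hz
    fin_cases v <;> fin_cases y <;> simp at hy <;> fin_cases z <;> simp at hz <;>
      simp at hyz ⊢ <;> simp_all

theorem nonempty_iso_caterpillar5 (T : PhyloTree 5) : Nonempty (caterpillar5 ≃g T.adj) := by
  obtain ⟨a, b, c, hab, hbc, hac, ha, hb, hc⟩ := T.exists_isInternal_path le_rfl
  obtain ⟨p₁, hap₁, hp₁b, -⟩ := exists_adj_ne_ne ha.two_lt_ncard b b
  obtain ⟨p₂, hap₂, hp₂b, hp₂p₁⟩ := exists_adj_ne_ne ha.two_lt_ncard b p₁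
  obtain ⟨w, hbw, hwa, hwc⟩ := exists_adj_ne_ne hb.two_lt_ncard a c
  obtain ⟨q₁, hcq₁, hq₁b, -⟩ := exists_adj_ne_ne hc.two_lt_ncard b b
  obtain ⟨q₂, hcq₂, hq₂b, hq₂q₁⟩ := exists_adj_ne_ne hc.two_lt_ncard b q₁
  refine Hom.IsLocallyInjective.nonempty_iso
    (f := ⟨![a, b, c, p₁, p₂, w, q₁, q₂], ?_⟩) ?_
    caterpillar5_connected.preconnected T.acyclic (by simp)
  · intro u v h
    simp only [caterpillar5, fromEdgeSet_adj, Set.mem_insert_iff, Set.mem_singleton_iff,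
      Sym2.eq_iff] at h
    rcases h with ⟨h | h | h | h | h | h | h, -⟩ <;>
      rcases h with ⟨rfl, rfl⟩ | ⟨rfl, rfl⟩ <;> simp <;>
      first | assumption | exact Adj.symm ‹_›
  · intro v y hy z hz hyz
    simp only [caterpillar5, mem_neighborSet, fromEdgeSet_adj, Set.mem_insert_iff,
      Set.mem_singleton_iff, Sym2.eq_iff] at hy hz
    fin_cases v <;> fin_cases y <;> simp at hy <;> fin_cases z <;> simp at hz <;>
      simp at hyz ⊢ <;> simp_all

theorem nonempty_iso_of_le_five (hn₁ : 2 ≤ n) (hn₂ : n ≤ 5) (T T' : PhyloTree n) :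
    Nonempty (T.adj ≃g T'.adj) := by
  obtain ⟨C, hC⟩ :
      ∃ C : SimpleGraph (Fin (2 * n - 2)), ∀ T : PhyloTree n, Nonempty (C ≃g T.adj) := by
    interval_cases n
    exacts [⟨_, nonempty_iso_caterpillar2⟩, ⟨_, nonempty_iso_caterpillar3⟩,
      ⟨_, nonempty_iso_caterpillar4⟩, ⟨_, nonempty_iso_caterpillar5⟩]
  obtain ⟨e⟩ := hC T
  obtain ⟨e'⟩ := hC T'
  exact ⟨e.symm.trans e'⟩

end PhyloTree

theorem stmt18_general (n k : ℕ) (hn1 : 2 ≤ n) (hn2 : n ≤ 5)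
    (T T' : PhyloTree n) :
    Set.ncard {F : Fin k → Fin n → Bool | IsMPTree F T} =
      Set.ncard {F : Fin k → Fin n → Bool | IsMPTree F T'} := by
  obtain ⟨φ⟩ := PhyloTree.nonempty_iso_of_le_five hn1 hn2 T T'
  exact PhyloTree.ncard_setOf_isMPTree_eq_of_iso φ

/-- For 2 ≤ n ≤ 5 and every k ≥ 1, every binary phylogenetic tree on {1,…,n} is a
maximum parsimony tree for the same number of k-tuples of characters. -/
theorem stmt18 (n k : ℕ) (hn1 : 2 ≤ n) (hn2 : n ≤ 5) (hk : 1 ≤ k)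
    (T T' : PhyloTree n) :
    Set.ncard {F : Fin k → Fin n → Bool | IsMPTree F T} =
      Set.ncard {F : Fin k → Fin n → Bool | IsMPTree F T'} :=
  stmt18_general n k hn1 hn2 T T'
end
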